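/- Let G be a colored graph with tuples ā and b̄ such that dist(ā, b̄) > 2^{k+1}. Then Duplicator wins the k-round global EF-game from position (G, ā, b̄) if and only if she wins the k-round local EF-game from the same position. -/
import Mathlib


variable {V : Type*} {κ : Type*}

/-- `x` lies in the closed `r`-ball around `c` in `G`. -/
def inBall (G : SimpleGraph V) (c : V) (r : ℕ) (x : V) : Prop :=
  ∃ p : G.Walk c x, p.length ≤ r

/-- `x` lies in the closed `r`-ball around the tuple `a` in `G`. -/
def inBallT (G : SimpleGraph V) {n : ℕ} (a : Fin n → V) (r : ℕ) (x : V) : Prop :=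
  ∃ i, inBall G (a i) r x

/-- The tuples `a` and `b` define a partial automorphism of `(G, col)`. -/
def IsPartialAuto (G : SimpleGraph V) (col : V → κ → Prop) {n : ℕ}
    (a b : Fin n → V) : Prop :=
  ∀ i j : Fin n,
    (a i = a j ↔ b i = b j) ∧ (∀ c, col (a i) c ↔ col (b i) c) ∧
    (G.Adj (a i) (a j) ↔ G.Adj (b i) (b j))

/-- Duplicator wins the `k`-round *global* EF-game from `(G, a, b, k)`. -/
def DWins (G : SimpleGraph V) (col : V → κ → Prop) :
    (k : ℕ) → {n : ℕ} → (Fin n → V) → (Fin n → V) → Prop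
  | 0, _, a, b => IsPartialAuto G col a b
  | (k + 1), _, a, b =>
      (∀ x : V, ∃ y : V, DWins G col k (Fin.snoc a x) (Fin.snoc b y)) ∧
      (∀ y : V, ∃ x : V, DWins G col k (Fin.snoc a x) (Fin.snoc b y))

/-- Duplicator wins the `k`-round *local* EF-game from `(G, a, b, k)`. -/
def DWinsLocal (G : SimpleGraph V) (col : V → κ → Prop) :
    (k : ℕ) → {n : ℕ} → (Fin n → V) → (Fin n → V) → Prop
  | 0, _, a, b => IsPartialAuto G col a b
  | (k + 1), _, a, b =>
      (∀ x : V, inBallT G a (2 ^ k) x → ∃ y : V, inBallT G b (2 ^ k) y ∧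
        DWinsLocal G col k (Fin.snoc a x) (Fin.snoc b y)) ∧
      (∀ y : V, inBallT G b (2 ^ k) y → ∃ x : V, inBallT G a (2 ^ k) x ∧
        DWinsLocal G col k (Fin.snoc a x) (Fin.snoc b y))


section
variable {V : Type*} {κ : Type*} (G : SimpleGraph V)

lemma inBall_refl' (x : V) (r : ℕ) : inBall G x r x := ⟨.nil, by simp⟩

lemma inBall_mono' {x y : V} {r r' : ℕ} (h : r ≤ r') : inBall G x r y → inBall G x r' y
  | ⟨p, hp⟩ => ⟨p, hp.trans h⟩

lemma inBall_symm' {x y : V} {r : ℕ} : inBall G x r y → inBall G y r x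
  | ⟨p, hp⟩ => ⟨p.reverse, by simpa using hp⟩

lemma inBall_trans' {x y z : V} {r s : ℕ} : inBall G x r y → inBall G y s z → inBall G x (r + s) z
  | ⟨p, hp⟩, ⟨q, hq⟩ => ⟨p.append q, by rw [SimpleGraph.Walk.length_append]; omega⟩

lemma inBall_of_eq' {x y : V} (h : x = y) (r : ℕ) : inBall G x r y := h ▸ inBall_refl' G x r

lemma inBall_of_adj' {x y : V} (h : G.Adj x y) {r : ℕ} (hr : 1 ≤ r) : inBall G x r y :=
  ⟨.cons h .nil, by simpa⟩

lemma ne_of_not_inBall' {x y : V} {r : ℕ} (h : ¬ inBall G x r y) : x ≠ y :=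
  fun e => h (inBall_of_eq' G e r)

lemma not_adj_of_not_inBall' {x y : V} {r : ℕ} (h : ¬ inBall G x r y) (hr : 1 ≤ r) :
    ¬ G.Adj x y := fun e => h (inBall_of_adj' G e hr)

lemma inBall_split' (r s : ℕ) : ∀ {x y : V}, inBall G x (r + s) y →
    ∃ w, inBall G x r w ∧ inBall G w s y := by
  induction r with
  | zero => exact fun {x y} h => ⟨x, inBall_refl' G x 0, by simpa using h⟩
  | succ r ih =>
    rintro x y ⟨p, hp⟩
    cases p with
    | nil => exact ⟨x, inBall_refl' _ _ _, inBall_refl' _ _ _⟩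
    | @cons _ u _ h q =>
      obtain ⟨w, ⟨p1, hp1⟩, h2⟩ := ih ⟨q, by simp only [SimpleGraph.Walk.length_cons] at hp; omega⟩
      exact ⟨w, ⟨.cons h p1, by simp only [SimpleGraph.Walk.length_cons]; omega⟩, h2⟩

lemma eq_of_inBall_zero' {x y : V} : inBall G x 0 y → x = y := by
  rintro ⟨p, hp⟩
  cases p with
  | nil => rfl
  | cons h q => simp at hp

end

section
variable {V : Type*} {κ : Type*} {G : SimpleGraph V} {col : V → κ → Prop}

lemma eq_or_adj_of_inBall_one' (G : SimpleGraph V) : ∀ {x y : V}, inBall G x 1 y → x = y ∨ G.Adj x y := by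
  rintro x y ⟨p, hp⟩
  cases p with
  | nil => exact Or.inl rfl
  | cons hadj q =>
    cases q with
    | nil => exact Or.inr hadj
    | cons h2 q2 => simp at hp

lemma isPartialAuto_symm' {n} {a b : Fin n → V} (h : IsPartialAuto G col a b) :
    IsPartialAuto G col b a :=
  fun i j => ⟨(h i j).1.symm, fun c => ((h i j).2.1 c).symm, (h i j).2.2.symm⟩

lemma dWins_symm' : ∀ (k : ℕ) {n} {a b : Fin n → V}, DWins G col k a b → DWins G col k b a := by
  intro k
  induction k with
  | zero => exact fun h => isPartialAuto_symm' h
  | succ k ih =>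
    intro n a b h
    rw [DWins] at h ⊢
    refine ⟨fun x => ?_, fun y => ?_⟩
    · obtain ⟨y, hy⟩ := h.2 x
      exact ⟨y, ih hy⟩
    · obtain ⟨x, hx⟩ := h.1 y
      exact ⟨x, ih hx⟩

lemma dWinsLocal_symm' : ∀ (k : ℕ) {n} {a b : Fin n → V},
    DWinsLocal G col k a b → DWinsLocal G col k b a := by
  intro k
  induction k with
  | zero => exact fun h => isPartialAuto_symm' h
  | succ k ih =>
    intro n a b h
    rw [DWinsLocal] at h ⊢
    refine ⟨fun x hx => ?_, fun y hy => ?_⟩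
    · obtain ⟨y, hy, hW⟩ := h.2 x hx
      exact ⟨y, hy, ih hW⟩
    · obtain ⟨x, hx, hW⟩ := h.1 y hy
      exact ⟨x, hx, ih hW⟩

lemma dWinsLocal_dist' : ∀ (k : ℕ) {n} {a b : Fin n → V}, DWinsLocal G col k a b →
    ∀ r, r ≤ 2 ^ k → ∀ i j, inBall G (a i) r (a j) → inBall G (b i) r (b j) := by
  intro k
  induction k with
  | zero =>
    intro n a b h r hr i j hij
    interval_cases r
    · exact inBall_of_eq' G ((h i j).1.mp (eq_of_inBall_zero' G hij)) 0
    · rcases eq_or_adj_of_inBall_one' G hij with e | hadj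
      · exact inBall_of_eq' G ((h i j).1.mp e) 1
      · exact inBall_of_adj' G ((h i j).2.2.mp hadj) le_rfl
  | succ k ih =>
    intro n a b h r hr i j hij
    rw [DWinsLocal] at h
    have hpow : 0 < (2:ℕ)^k := Nat.two_pow_pos k
    set r1 := min r (2^k) with hr1def
    have hr1 : r1 ≤ 2^k := min_le_right _ _
    have hr2 : r - r1 ≤ 2^k := by omega
    have hsum : r1 + (r - r1) = r := by omega
    obtain ⟨w, hw1, hw2⟩ := inBall_split' G r1 (r - r1) (by rw [hsum]; exact hij)
    obtain ⟨y, hy, hW⟩ := h.1 w ⟨i, inBall_mono' G hr1 hw1⟩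
    have e1 := ih hW r1 hr1 (Fin.castSucc i) (Fin.last n)
      (by simpa [Fin.snoc_castSucc, Fin.snoc_last] using hw1)
    have e2 := ih hW (r - r1) hr2 (Fin.last n) (Fin.castSucc j)
      (by simpa [Fin.snoc_castSucc, Fin.snoc_last] using hw2)
    simp only [Fin.snoc_castSucc, Fin.snoc_last] at e1 e2
    have := inBall_trans' G e1 e2
    rwa [hsum] at this

lemma dWins_dist' : ∀ (k : ℕ) {n} {a b : Fin n → V}, DWins G col k a b →
    ∀ r, r ≤ 2 ^ k → ∀ i j, inBall G (a i) r (a j) → inBall G (b i) r (b j) := by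
  intro k
  induction k with
  | zero =>
    intro n a b h r hr i j hij
    interval_cases r
    · exact inBall_of_eq' G ((h i j).1.mp (eq_of_inBall_zero' G hij)) 0
    · rcases eq_or_adj_of_inBall_one' G hij with e | hadj
      · exact inBall_of_eq' G ((h i j).1.mp e) 1
      · exact inBall_of_adj' G ((h i j).2.2.mp hadj) le_rfl
  | succ k ih =>
    intro n a b h r hr i j hij
    rw [DWins] at h
    have hpow : 0 < (2:ℕ)^k := Nat.two_pow_pos k
    set r1 := min r (2^k) with hr1def
    have hr1 : r1 ≤ 2^k := min_le_right _ _
    have hr2 : r - r1 ≤ 2^k := by omega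
    have hsum : r1 + (r - r1) = r := by omega
    obtain ⟨w, hw1, hw2⟩ := inBall_split' G r1 (r - r1) (by rw [hsum]; exact hij)
    obtain ⟨y, hW⟩ := h.1 w
    have e1 := ih hW r1 hr1 (Fin.castSucc i) (Fin.last n)
      (by simpa [Fin.snoc_castSucc, Fin.snoc_last] using hw1)
    have e2 := ih hW (r - r1) hr2 (Fin.last n) (Fin.castSucc j)
      (by simpa [Fin.snoc_castSucc, Fin.snoc_last] using hw2)
    simp only [Fin.snoc_castSucc, Fin.snoc_last] at e1 e2
    have := inBall_trans' G e1 e2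
    rwa [hsum] at this
end

section
variable {V : Type*} {κ : Type*} {G : SimpleGraph V} {col : V → κ → Prop}

lemma dWinsLocal_downgrade' : ∀ (k : ℕ) {n} {a b : Fin (n+1) → V},
    DWinsLocal G col (k+1) a b → DWinsLocal G col k a b := by
  intro k
  induction k with
  | zero =>
    intro n a b h
    rw [DWinsLocal] at h
    obtain ⟨y, hy, hp⟩ := h.1 (a 0) ⟨0, inBall_refl' G _ _⟩
    intro i j
    have := hp (Fin.castSucc i) (Fin.castSucc j)
    simpa [Fin.snoc_castSucc] using this
  | succ k ih =>
    intro n a b h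
    rw [DWinsLocal] at h ⊢
    have h0 : 0 < (2:ℕ)^k := Nat.two_pow_pos k
    have hmono : (2:ℕ)^k ≤ 2^(k+1) := by omega
    refine ⟨fun x hx => ?_, fun y hy => ?_⟩
    · obtain ⟨i0, hx0⟩ := hx
      obtain ⟨y, hy, hW⟩ := h.1 x ⟨i0, inBall_mono' G hmono hx0⟩
      have hloc := dWinsLocal_dist' (k+1) hW (2^k) hmono (Fin.castSucc i0) (Fin.last _)
        (by simpa [Fin.snoc_castSucc, Fin.snoc_last] using hx0)
      simp only [Fin.snoc_castSucc, Fin.snoc_last] at hloc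
      exact ⟨y, ⟨i0, hloc⟩, ih hW⟩
    · obtain ⟨i0, hy0⟩ := hy
      obtain ⟨x, hx, hW⟩ := h.2 y ⟨i0, inBall_mono' G hmono hy0⟩
      have hloc := dWinsLocal_dist' (k+1) (dWinsLocal_symm' (k+1) hW) (2^k) hmono
        (Fin.castSucc i0) (Fin.last _)
        (by simpa [Fin.snoc_castSucc, Fin.snoc_last] using hy0)
      simp only [Fin.snoc_castSucc, Fin.snoc_last] at hloc
      exact ⟨x, ⟨i0, hloc⟩, ih hW⟩

lemma dWins_to_dWinsLocal' : ∀ (k : ℕ) {n} {a b : Fin n → V},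
    (∀ i j, ¬ inBall G (a i) (2 ^ (k + 1)) (b j)) → DWins G col k a b →
    DWinsLocal G col k a b := by
  intro k
  induction k with
  | zero => exact fun _ h => h
  | succ k ih =>
    intro n a b hab h
    rw [DWins] at h
    rw [DWinsLocal]
    have h0 : 0 < (2:ℕ)^k := Nat.two_pow_pos k
    refine ⟨fun x hx => ?_, fun y hy => ?_⟩
    · obtain ⟨i0, hx0⟩ := hx
      obtain ⟨y, hW⟩ := h.1 x
      have hy0 : inBall G (b i0) (2^k) y := by
        have := dWins_dist' k hW (2^k) le_rfl (Fin.castSucc i0) (Fin.last _)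
          (by simpa [Fin.snoc_castSucc, Fin.snoc_last] using hx0)
        simpa [Fin.snoc_castSucc, Fin.snoc_last] using this
      refine ⟨y, ⟨i0, hy0⟩, ih ?_ hW⟩
      intro i j
      refine Fin.lastCases ?_ (fun j' => ?_) j <;> refine Fin.lastCases ?_ (fun i' => ?_) i <;>
        simp only [Fin.snoc_castSucc, Fin.snoc_last] <;> intro hB
      · exact hab i0 i0 (inBall_mono' G (by omega)
          (inBall_trans' G hx0 (inBall_trans' G hB (inBall_symm' G hy0))))
      · exact hab i' i0 (inBall_mono' G (by omega) (inBall_trans' G hB (inBall_symm' G hy0)))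
      · exact hab i0 j' (inBall_mono' G (by omega) (inBall_trans' G hx0 hB))
      · exact hab i' j' (inBall_mono' G (by omega) hB)
    · obtain ⟨i0, hy0⟩ := hy
      obtain ⟨x, hW⟩ := h.2 y
      have hx0 : inBall G (a i0) (2^k) x := by
        have := dWins_dist' k (dWins_symm' k hW) (2^k) le_rfl (Fin.castSucc i0) (Fin.last _)
          (by simpa [Fin.snoc_castSucc, Fin.snoc_last] using hy0)
        simpa [Fin.snoc_castSucc, Fin.snoc_last] using this
      refine ⟨x, ⟨i0, hx0⟩, ih ?_ hW⟩
      intro i j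
      refine Fin.lastCases ?_ (fun j' => ?_) j <;> refine Fin.lastCases ?_ (fun i' => ?_) i <;>
        simp only [Fin.snoc_castSucc, Fin.snoc_last] <;> intro hB
      · exact hab i0 i0 (inBall_mono' G (by omega)
          (inBall_trans' G hx0 (inBall_trans' G hB (inBall_symm' G hy0))))
      · exact hab i' i0 (inBall_mono' G (by omega) (inBall_trans' G hB (inBall_symm' G hy0)))
      · exact hab i0 j' (inBall_mono' G (by omega) (inBall_trans' G hx0 hB))
      · exact hab i' j' (inBall_mono' G (by omega) hB)
end

/-- The coupling invariant for the local-to-global direction. -/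
def EFInv (G : SimpleGraph V) (col : V → κ → Prop) (k : ℕ) {m : ℕ} (a b : Fin m → V) : Prop :=
  ∃ (q r : ℕ) (c d : Fin (q+1) → V) (z : Fin r → V)
    (ι : Fin m → (Fin (q+1) × Bool) ⊕ Fin r),
    (∀ i, a i = Sum.elim (fun p => if p.2 then c p.1 else d p.1) z (ι i)) ∧
    (∀ i, b i = Sum.elim (fun p => if p.2 then d p.1 else c p.1) z (ι i)) ∧
    (∀ s t, ¬ inBall G (c s) (2^(k+1)) (d t)) ∧
    (∀ u s, ¬ inBall G (z u) (2^k) (c s)) ∧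
    (∀ u s, ¬ inBall G (z u) (2^k) (d s)) ∧
    DWinsLocal G col k c d

section
variable {G : SimpleGraph V} {col : V → κ → Prop}

lemma efInv_symm' (k : ℕ) {m} {a b : Fin m → V} (h : EFInv G col k a b) :
    EFInv G col k b a := by
  obtain ⟨q, r, c, d, z, ι, ha, hb, S1, S2c, S2d, hW⟩ := h
  exact ⟨q, r, d, c, z, ι, hb, ha, fun s t hB => S1 t s (inBall_symm' G hB), S2d, S2c,
    dWinsLocal_symm' k hW⟩

lemma efInv_step' (k : ℕ) {m} {a b : Fin m → V} (h : EFInv G col (k+1) a b) :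
    ∀ x : V, ∃ y : V, EFInv G col k (Fin.snoc a x) (Fin.snoc b y) := by
  obtain ⟨q, r, c, d, z, ι, ha, hb, S1, S2c, S2d, hW⟩ := h
  have hW' := hW
  rw [DWinsLocal] at hW'
  have h0 : 0 < (2:ℕ)^k := Nat.two_pow_pos k
  intro x
  by_cases h1 : ∃ s, inBall G (c s) (2^k) x
  · obtain ⟨s0, hs0⟩ := h1
    obtain ⟨y, hyT, hWy⟩ := hW'.1 x ⟨s0, hs0⟩
    obtain ⟨t0, ht0⟩ := hyT
    refine ⟨y, q+1, r, Fin.snoc c x, Fin.snoc d y, z,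
      Fin.snoc (fun i => Sum.map (Prod.map Fin.castSucc id) id (ι i))
        (Sum.inl (Fin.last (q+1), true)), ?_, ?_, ?_, ?_, ?_, hWy⟩
    · intro i
      refine Fin.lastCases ?_ (fun i' => ?_) i
      · simp
      · simp only [Fin.snoc_castSucc]
        rw [ha i']
        cases hpi : ι i' with
        | inl p =>
          obtain ⟨s, bb⟩ := p
          cases bb <;> simp [Fin.snoc_castSucc]
        | inr u => simp
    · intro i
      refine Fin.lastCases ?_ (fun i' => ?_) i
      · simp
      · simp only [Fin.snoc_castSucc]
        rw [hb i']
        cases hpi : ι i' with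
        | inl p =>
          obtain ⟨s, bb⟩ := p
          cases bb <;> simp [Fin.snoc_castSucc]
        | inr u => simp
    · intro s t
      refine Fin.lastCases ?_ (fun s' => ?_) s <;> refine Fin.lastCases ?_ (fun t' => ?_) t <;>
        simp only [Fin.snoc_castSucc, Fin.snoc_last] <;> intro hB
      · exact S1 s0 t0 (inBall_mono' G (by omega)
          (inBall_trans' G hs0 (inBall_trans' G hB (inBall_symm' G ht0))))
      · exact S1 s0 t' (inBall_mono' G (by omega) (inBall_trans' G hs0 hB))
      · exact S1 s' t0 (inBall_mono' G (by omega) (inBall_trans' G hB (inBall_symm' G ht0)))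
      · exact S1 s' t' (inBall_mono' G (by omega) hB)
    · intro u s
      refine Fin.lastCases ?_ (fun s' => ?_) s <;>
        simp only [Fin.snoc_castSucc, Fin.snoc_last] <;> intro hB
      · exact S2c u s0 (inBall_mono' G (by omega) (inBall_trans' G hB (inBall_symm' G hs0)))
      · exact S2c u s' (inBall_mono' G (by omega) hB)
    · intro u t
      refine Fin.lastCases ?_ (fun t' => ?_) t <;>
        simp only [Fin.snoc_castSucc, Fin.snoc_last] <;> intro hB
      · exact S2d u t0 (inBall_mono' G (by omega) (inBall_trans' G hB (inBall_symm' G ht0)))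
      · exact S2d u t' (inBall_mono' G (by omega) hB)
  · by_cases h2 : ∃ t, inBall G (d t) (2^k) x
    · obtain ⟨t0, ht0⟩ := h2
      obtain ⟨w, hwT, hWw⟩ := hW'.2 x ⟨t0, ht0⟩
      obtain ⟨s0, hs0⟩ := hwT
      refine ⟨w, q+1, r, Fin.snoc c w, Fin.snoc d x, z,
        Fin.snoc (fun i => Sum.map (Prod.map Fin.castSucc id) id (ι i))
          (Sum.inl (Fin.last (q+1), false)), ?_, ?_, ?_, ?_, ?_, hWw⟩
      · intro i
        refine Fin.lastCases ?_ (fun i' => ?_) i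
        · simp
        · simp only [Fin.snoc_castSucc]
          rw [ha i']
          cases hpi : ι i' with
          | inl p =>
            obtain ⟨s, bb⟩ := p
            cases bb <;> simp [Fin.snoc_castSucc]
          | inr u => simp
      · intro i
        refine Fin.lastCases ?_ (fun i' => ?_) i
        · simp
        · simp only [Fin.snoc_castSucc]
          rw [hb i']
          cases hpi : ι i' with
          | inl p =>
            obtain ⟨s, bb⟩ := p
            cases bb <;> simp [Fin.snoc_castSucc]
          | inr u => simp
      · intro s t
        refine Fin.lastCases ?_ (fun s' => ?_) s <;> refine Fin.lastCases ?_ (fun t' => ?_) t <;>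
          simp only [Fin.snoc_castSucc, Fin.snoc_last] <;> intro hB
        · exact S1 s0 t0 (inBall_mono' G (by omega)
            (inBall_trans' G hs0 (inBall_trans' G hB (inBall_symm' G ht0))))
        · exact S1 s0 t' (inBall_mono' G (by omega) (inBall_trans' G hs0 hB))
        · exact S1 s' t0 (inBall_mono' G (by omega) (inBall_trans' G hB (inBall_symm' G ht0)))
        · exact S1 s' t' (inBall_mono' G (by omega) hB)
      · intro u s
        refine Fin.lastCases ?_ (fun s' => ?_) s <;>
          simp only [Fin.snoc_castSucc, Fin.snoc_last] <;> intro hB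
        · exact S2c u s0 (inBall_mono' G (by omega) (inBall_trans' G hB (inBall_symm' G hs0)))
        · exact S2c u s' (inBall_mono' G (by omega) hB)
      · intro u t
        refine Fin.lastCases ?_ (fun t' => ?_) t <;>
          simp only [Fin.snoc_castSucc, Fin.snoc_last] <;> intro hB
        · exact S2d u t0 (inBall_mono' G (by omega) (inBall_trans' G hB (inBall_symm' G ht0)))
        · exact S2d u t' (inBall_mono' G (by omega) hB)
    · push_neg at h1 h2
      refine ⟨x, q, r+1, c, d, Fin.snoc z x,
        Fin.snoc (fun i => Sum.map id Fin.castSucc (ι i)) (Sum.inr (Fin.last r)),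
        ?_, ?_, fun s t hB => S1 s t (inBall_mono' G (by omega) hB), ?_, ?_,
        dWinsLocal_downgrade' k hW⟩
      · intro i
        refine Fin.lastCases ?_ (fun i' => ?_) i
        · simp
        · simp only [Fin.snoc_castSucc]
          rw [ha i']
          cases hpi : ι i' with
          | inl p => simp
          | inr u => simp [Fin.snoc_castSucc]
      · intro i
        refine Fin.lastCases ?_ (fun i' => ?_) i
        · simp
        · simp only [Fin.snoc_castSucc]
          rw [hb i']
          cases hpi : ι i' with
          | inl p => simp
          | inr u => simp [Fin.snoc_castSucc]
      · intro u s
        refine Fin.lastCases ?_ (fun u' => ?_) u <;>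
          simp only [Fin.snoc_castSucc, Fin.snoc_last] <;> intro hB
        · exact h1 s (inBall_symm' G hB)
        · exact S2c u' s (inBall_mono' G (by omega) hB)
      · intro u t
        refine Fin.lastCases ?_ (fun u' => ?_) u <;>
          simp only [Fin.snoc_castSucc, Fin.snoc_last] <;> intro hB
        · exact h2 t (inBall_symm' G hB)
        · exact S2d u' t (inBall_mono' G (by omega) hB)

lemma efInv_dWins' : ∀ (k : ℕ) {m} {a b : Fin m → V}, EFInv G col k a b → DWins G col k a b := by
  intro k
  induction k with
  | zero =>
    rintro m a b ⟨q, r, c, d, z, ι, ha, hb, S1, S2c, S2d, hW⟩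
    rw [DWinsLocal] at hW
    rw [DWins]
    have hcd_ne : ∀ s t, c s ≠ d t := fun s t => ne_of_not_inBall' G (S1 s t)
    have hcd_na : ∀ s t, ¬ G.Adj (c s) (d t) :=
      fun s t => not_adj_of_not_inBall' G (S1 s t) (by norm_num)
    have hzc_ne : ∀ u s, z u ≠ c s := fun u s => ne_of_not_inBall' G (S2c u s)
    have hzc_na : ∀ u s, ¬ G.Adj (z u) (c s) :=
      fun u s => not_adj_of_not_inBall' G (S2c u s) (by norm_num)
    have hzd_ne : ∀ u s, z u ≠ d s := fun u s => ne_of_not_inBall' G (S2d u s)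
    have hzd_na : ∀ u s, ¬ G.Adj (z u) (d s) :=
      fun u s => not_adj_of_not_inBall' G (S2d u s) (by norm_num)
    intro i j
    rw [ha i, ha j, hb i, hb j]
    cases hpi : ι i with
    | inl p =>
      obtain ⟨s, bs⟩ := p
      cases hpj : ι j with
      | inl p' =>
        obtain ⟨t, bt⟩ := p'
        cases bs <;> cases bt <;> simp only [Sum.elim_inl, if_true, if_false, Bool.false_eq_true,
          ite_true, ite_false, cond]
        · -- FF
          exact ⟨(hW s t).1.symm, fun x => ((hW s s).2.1 x).symm, (hW s t).2.2.symm⟩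
        · -- FT
          exact ⟨iff_of_false (fun e => hcd_ne t s e.symm) (hcd_ne s t),
            fun x => ((hW s s).2.1 x).symm,
            iff_of_false (fun e => hcd_na t s e.symm) (hcd_na s t)⟩
        · -- TF
          exact ⟨iff_of_false (hcd_ne s t) (fun e => hcd_ne t s e.symm),
            (hW s s).2.1,
            iff_of_false (hcd_na s t) (fun e => hcd_na t s e.symm)⟩
        · -- TT
          exact hW s t
      | inr u' =>
        cases bs <;> simp only [Sum.elim_inl, Sum.elim_inr, ite_true, ite_false,
          Bool.false_eq_true]
        · exact ⟨iff_of_false (fun e => hzd_ne u' s e.symm) (fun e => hzc_ne u' s e.symm),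
            fun x => ((hW s s).2.1 x).symm,
            iff_of_false (fun e => hzd_na u' s e.symm) (fun e => hzc_na u' s e.symm)⟩
        · exact ⟨iff_of_false (fun e => hzc_ne u' s e.symm) (fun e => hzd_ne u' s e.symm),
            (hW s s).2.1,
            iff_of_false (fun e => hzc_na u' s e.symm) (fun e => hzd_na u' s e.symm)⟩
    | inr u =>
      cases hpj : ι j with
      | inl p' =>
        obtain ⟨t, bt⟩ := p'
        cases bt <;> simp only [Sum.elim_inl, Sum.elim_inr, ite_true, ite_false,
          Bool.false_eq_true]
        · exact ⟨iff_of_false (hzd_ne u t) (hzc_ne u t), by simp,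
            iff_of_false (hzd_na u t) (hzc_na u t)⟩
        · exact ⟨iff_of_false (hzc_ne u t) (hzd_ne u t), by simp,
            iff_of_false (hzc_na u t) (hzd_na u t)⟩
      | inr u' =>
        exact ⟨Iff.rfl, fun x => Iff.rfl, Iff.rfl⟩
  | succ k ih =>
    intro m a b h
    rw [DWins]
    refine ⟨fun x => ?_, fun y => ?_⟩
    · obtain ⟨y, hI⟩ := efInv_step' k h x
      exact ⟨y, ih hI⟩
    · obtain ⟨x, hI⟩ := efInv_step' k (efInv_symm' (k+1) h) y
      exact ⟨x, dWins_symm' k (ih hI)⟩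
end

/-- For nonempty tuples `a`, `b` with `dist(a, b) > 2^{k+1}`, Duplicator wins
the `k`-round global EF-game from `(G, a, b, k)` iff she wins the `k`-round
local EF-game from the same position. -/
theorem dWins_iff_dWinsLocal (G : SimpleGraph V) (col : V → κ → Prop)
    {n : ℕ} (hn : 0 < n) (a b : Fin n → V) (k : ℕ)
    (hab : ∀ i j, ¬ inBall G (a i) (2 ^ (k + 1)) (b j)) :
    DWins G col k a b ↔ DWinsLocal G col k a b := by
  constructor
  · exact fun h => dWins_to_dWinsLocal' k hab h
  · intro hl
    obtain ⟨q, rfl⟩ : ∃ q, n = q + 1 := ⟨n - 1, by omega⟩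
    exact efInv_dWins' k ⟨q, 0, a, b, Fin.elim0, fun i => Sum.inl (i, true),
      fun i => rfl, fun i => rfl, hab, fun u => u.elim0, fun u => u.elim0, hl⟩
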